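/- arXiv:2211.02913 — 2 statements merged into one kernel-verified Lean document; each statement's English description precedes it below -/
import Mathlib

section
/- (Anisotropic angle comparison) Let F : S^n → ℝ be C² positive with ∇²F + Fσ > 0 and Φ its Cahn–Hoffman map. Let x, z ∈ S^n be distinct points and let y lie on a length-minimizing geodesic in S^n joining x and z. Then ⟨Φ(x), z⟩ ≤ ⟨Φ(y), z⟩, with equality if and only if x = y. -/
open MeasureTheory

set_option maxHeartbeats 1000000

noncomputable section

abbrev Euc (n : ℕ) := EuclideanSpace ℝ (Fin (n + 1))

def rinner {n : ℕ} (x y : Euc n) : ℝ := inner ℝ x y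

def sph (n : ℕ) : Set (Euc n) := Metric.sphere 0 1

def vert (n : ℕ) : Euc n := EuclideanSpace.single (Fin.last n) 1

def Fdual {n : ℕ} (F : Euc n → ℝ) (x : Euc n) : ℝ :=
  sSup {y | ∃ z ∈ sph n, y = rinner x z / F z}

def sphGrad {n : ℕ} (F : Euc n → ℝ) (z : Euc n) : Euc n :=
  gradient F z - (rinner (gradient F z) z) • z

def cahnHoffman {n : ℕ} (F : Euc n → ℝ) (z : Euc n) : Euc n :=
  sphGrad F z + F z • z

def APos {n : ℕ} (F : Euc n → ℝ) : Prop :=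
  ∀ z ∈ sph n, ∀ v : Euc n, rinner v z = 0 → v ≠ 0 →
    0 < rinner (fderiv ℝ (cahnHoffman F) z v) v

def EFvert {n : ℕ} (F : Euc n → ℝ) (ω : ℝ) : Euc n :=
  if ω < 0 then (F (vert n))⁻¹ • cahnHoffman F (vert n)
  else if 0 < ω then -((F (-vert n))⁻¹ • cahnHoffman F (-vert n))
  else vert n


/-- Intrinsic (geodesic) distance on the round unit sphere. -/
def sphDist {n : ℕ} (a b : Euc n) : ℝ := Real.arccos (rinner a b)

section AUXSEC
open Real
local notation "⟪" a ", " b "⟫" => (inner ℝ a b : ℝ)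

variable {n : ℕ}

lemma mem_sph_iff {p : Euc n} : p ∈ sph n ↔ ‖p‖ = 1 := by
  simp [sph, mem_sphere_iff_norm]

section aux
variable {F : Euc n → ℝ}

lemma diff_grad (hF : ContDiff ℝ 2 F) : Differentiable ℝ (fun z : Euc n => gradient F z) := by
  have h1 : ContDiff ℝ 1 (fderiv ℝ F) := hF.fderiv_right (by norm_num)
  exact ((InnerProductSpace.toDual ℝ (Euc n)).symm.contDiff.comp h1).differentiable one_ne_zero

lemma grad_inner (z v : Euc n) : ⟪gradient F z, v⟫ = fderiv ℝ F z v :=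
  InnerProductSpace.toDual_symm_apply

lemma diff_CH (hF : ContDiff ℝ 2 F) : Differentiable ℝ (cahnHoffman F) := by
  unfold cahnHoffman sphGrad rinner
  exact (((diff_grad hF).sub (((diff_grad hF).inner ℝ differentiable_id).smul
    differentiable_id)).add ((hF.differentiable two_ne_zero).smul differentiable_id))

lemma CH_inner_self {p : Euc n} (hp : ‖p‖ = 1) : ⟪cahnHoffman F p, p⟫ = F p := by
  have hpp : ⟪p, p⟫ = 1 := by
    rw [real_inner_self_eq_norm_mul_norm, hp]; ring
  simp only [cahnHoffman, sphGrad, rinner, inner_add_left, inner_sub_left,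
    real_inner_smul_left, hpp]
  ring

end aux

section key
variable {F : Euc n → ℝ}

lemma inner_combo {x u : Euc n} (hx : ‖x‖ = 1) (hu : ‖u‖ = 1) (hxu : ⟪x, u⟫ = 0)
    (a b a' b' : ℝ) : ⟪a • x + b • u, a' • x + b' • u⟫ = a * a' + b * b' := by
  have hxx : ⟪x, x⟫ = 1 := by rw [real_inner_self_eq_norm_mul_norm, hx]; ring
  have huu : ⟪u, u⟫ = 1 := by rw [real_inner_self_eq_norm_mul_norm, hu]; ring
  have hux : ⟪u, x⟫ = 0 := by rw [real_inner_comm]; exact hxu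
  simp only [inner_add_left, inner_add_right, real_inner_smul_left, real_inner_smul_right,
    hxx, huu, hxu, hux]
  ring

lemma key (hF : ContDiff ℝ 2 F) (hA : APos F) {x u : Euc n}
    (hx : ‖x‖ = 1) (hu : ‖u‖ = 1) (hxu : ⟪x, u⟫ = 0) {s c : ℝ}
    (hs : 0 < s) (hsc : s ≤ c) (hc : c ≤ π) :
    ⟪cahnHoffman F x, Real.cos c • x + Real.sin c • u⟫ <
      ⟪cahnHoffman F (Real.cos s • x + Real.sin s • u), Real.cos c • x + Real.sin c • u⟫ := by
  set γ : ℝ → Euc n := fun t => Real.cos t • x + Real.sin t • u with hγdef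
  set γ' : ℝ → Euc n := fun t => (-Real.sin t) • x + Real.cos t • u with hγ'def
  set w : Euc n := Real.cos c • x + Real.sin c • u with hwdef
  have hγd : ∀ t, HasDerivAt γ (γ' t) t := fun t =>
    ((Real.hasDerivAt_cos t).smul_const x).add ((Real.hasDerivAt_sin t).smul_const u)
  have hγγ : ∀ t, ⟪γ t, γ t⟫ = 1 := fun t => by
    rw [hγdef]; rw [inner_combo hx hu hxu]; nlinarith [Real.sin_sq_add_cos_sq t]
  have hγγ' : ∀ t, ⟪γ' t, γ t⟫ = 0 := fun t => by
    rw [hγdef, hγ'def]; rw [inner_combo hx hu hxu]; ring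
  have hγ'γ' : ∀ t, ⟪γ' t, γ' t⟫ = 1 := fun t => by
    rw [hγ'def]; rw [inner_combo hx hu hxu]; nlinarith [Real.sin_sq_add_cos_sq t]
  have hγsph : ∀ t, γ t ∈ sph n := fun t => by
    rw [mem_sph_iff]
    have := real_inner_self_eq_norm_mul_norm (γ t)
    nlinarith [norm_nonneg (γ t), hγγ t]
  -- derivative of Φ ∘ γ
  have hΦγ : ∀ t, HasDerivAt (fun t => cahnHoffman F (γ t))
      (fderiv ℝ (cahnHoffman F) (γ t) (γ' t)) t := fun t =>
    ((diff_CH hF (γ t)).hasFDerivAt).comp_hasDerivAt t (hγd t)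
  -- tangency: ⟪DΦ(γ'), γ⟫ = 0
  have htan : ∀ t, ⟪fderiv ℝ (cahnHoffman F) (γ t) (γ' t), γ t⟫ = 0 := by
    intro t
    have h1 : HasDerivAt (fun t => ⟪cahnHoffman F (γ t), γ t⟫)
        (⟪cahnHoffman F (γ t), γ' t⟫ + ⟪fderiv ℝ (cahnHoffman F) (γ t) (γ' t), γ t⟫) t :=
      (hΦγ t).inner ℝ (hγd t)
    have h2 : (fun t => ⟪cahnHoffman F (γ t), γ t⟫) = fun t => F (γ t) := by
      funext r
      exact CH_inner_self (mem_sph_iff.mp (hγsph r))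
    have h3 : HasDerivAt (fun t => F (γ t)) (fderiv ℝ F (γ t) (γ' t)) t :=
      ((hF.differentiable two_ne_zero (γ t)).hasFDerivAt).comp_hasDerivAt t (hγd t)
    rw [h2] at h1
    have h4 := h1.unique h3
    have h5 : ⟪cahnHoffman F (γ t), γ' t⟫ = fderiv ℝ F (γ t) (γ' t) := by
      simp only [cahnHoffman, sphGrad, rinner, inner_add_left, inner_sub_left,
        real_inner_smul_left]
      have h6 : ⟪γ t, γ' t⟫ = 0 := by rw [real_inner_comm]; exact hγγ' t
      rw [h6, grad_inner]
      ring
    rw [h5] at h4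
    linarith
  -- derivative of g
  have hg : ∀ t, HasDerivAt (fun t => ⟪cahnHoffman F (γ t), w⟫)
      (⟪fderiv ℝ (cahnHoffman F) (γ t) (γ' t), w⟫) t := by
    intro t
    have := (hΦγ t).inner ℝ (hasDerivAt_const t w)
    simpa using this
  -- positivity of the derivative on (0, s)
  have hderiv : ∀ t ∈ Set.Ioo (0:ℝ) s,
      0 < deriv (fun t => ⟪cahnHoffman F (γ t), w⟫) t := by
    intro t ht
    rw [(hg t).deriv]
    have hwt : w = Real.cos (c - t) • γ t + Real.sin (c - t) • γ' t := by
      rw [hwdef, hγdef, hγ'def]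
      have h1 : Real.cos c = Real.cos (c - t) * Real.cos t - Real.sin (c - t) * Real.sin t := by
        rw [← Real.cos_add]; ring_nf
      have h2 : Real.sin c = Real.sin (c - t) * Real.cos t + Real.cos (c - t) * Real.sin t := by
        rw [← Real.sin_add]; ring_nf
      rw [h1, h2]
      module
    rw [hwt, inner_add_right, real_inner_smul_right, real_inner_smul_right, htan t]
    have hQ : 0 < ⟪fderiv ℝ (cahnHoffman F) (γ t) (γ' t), γ' t⟫ := by
      have hne : γ' t ≠ 0 := by
        intro h
        have := hγ'γ' t
        rw [h] at this
        simp at this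
      exact hA (γ t) (hγsph t) (γ' t) (hγγ' t) hne
    have hsin : 0 < Real.sin (c - t) := by
      apply Real.sin_pos_of_pos_of_lt_pi
      · linarith [ht.2]
      · linarith [ht.1]
    nlinarith
  -- strict monotonicity
  have hmono : StrictMonoOn (fun t => ⟪cahnHoffman F (γ t), w⟫) (Set.Icc 0 s) := by
    apply strictMonoOn_of_deriv_pos (convex_Icc 0 s)
    · exact fun t _ => ((hg t).continuousAt).continuousWithinAt
    · intro t ht
      rw [interior_Icc] at ht
      exact hderiv t ht
  have h0 : γ 0 = x := by simp [hγdef]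
  have := hmono (Set.left_mem_Icc.mpr (le_of_lt hs)) (Set.right_mem_Icc.mpr (le_of_lt hs)) hs
  simp only at this
  rw [h0] at this
  exact this

end key

lemma rinner_eq (a b : Euc n) : rinner a b = ⟪a, b⟫ := rfl

lemma norm_eq_one_of_inner_self {v : Euc n} (h : ⟪v, v⟫ = 1) : ‖v‖ = 1 := by
  have := real_inner_self_eq_norm_mul_norm v
  nlinarith [norm_nonneg v]


/-- anisotropic angle comparison principle.  `y` lies on a
length-minimizing geodesic joining `x` and `z` iff the geodesic distances add up. -/
theorem aniso_angle_comparison {n : ℕ} (F : Euc n → ℝ)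
    (hF : ContDiff ℝ 2 F) (hpos : ∀ z ∈ sph n, 0 < F z) (hA : APos F)
    (x z y : Euc n) (hx : x ∈ sph n) (hz : z ∈ sph n) (hy : y ∈ sph n)
    (hxz : x ≠ z)
    (hgeo : sphDist x y + sphDist y z = sphDist x z) :
    rinner (cahnHoffman F x) z ≤ rinner (cahnHoffman F y) z ∧
      (rinner (cahnHoffman F x) z = rinner (cahnHoffman F y) z ↔ x = y) := by
  have hx1 : ‖x‖ = 1 := mem_sph_iff.mp hx
  have hz1 : ‖z‖ = 1 := mem_sph_iff.mp hz
  have hy1 : ‖y‖ = 1 := mem_sph_iff.mp hy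
  have bound : ∀ a b : Euc n, ‖a‖ = 1 → ‖b‖ = 1 → -1 ≤ ⟪a, b⟫ ∧ ⟪a, b⟫ ≤ 1 := by
    intro a b ha hb
    have h := abs_real_inner_le_norm a b
    rw [ha, hb, mul_one] at h
    have := abs_le.mp h
    exact ⟨this.1, this.2⟩
  obtain ⟨hxzl, hxzu⟩ := bound x z hx1 hz1
  obtain ⟨hxyl, hxyu⟩ := bound x y hx1 hy1
  obtain ⟨hyzl, hyzu⟩ := bound y z hy1 hz1
  have hxx : ⟪x, x⟫ = 1 := by rw [real_inner_self_eq_norm_mul_norm, hx1]; ring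
  have hyy : ⟪y, y⟫ = 1 := by rw [real_inner_self_eq_norm_mul_norm, hy1]; ring
  set d := sphDist x z with hd_def
  set s := sphDist x y with hs_def
  set s' := sphDist y z with hs'_def
  have hcosd : Real.cos d = ⟪x, z⟫ := Real.cos_arccos hxzl hxzu
  have hcoss : Real.cos s = ⟪x, y⟫ := Real.cos_arccos hxyl hxyu
  have hcoss' : Real.cos s' = ⟪y, z⟫ := Real.cos_arccos hyzl hyzu
  have hd_pi : d ≤ π := Real.arccos_le_pi _
  have hs_nonneg : 0 ≤ s := Real.arccos_nonneg _
  have hs'_nonneg : 0 ≤ s' := Real.arccos_nonneg _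
  have hd_pos : 0 < d := by
    rcases (Real.arccos_nonneg (rinner x z)).lt_or_eq with h | h
    · exact h
    · exfalso
      have h1 : (1:ℝ) ≤ ⟪x, z⟫ := Real.arccos_eq_zero.mp h.symm
      exact hxz ((inner_eq_one_iff_of_norm_eq_one hx1 hz1).mp (le_antisymm hxzu h1))
  have hsd : s ≤ d := by linarith [hgeo, hs'_nonneg]
  rcases hs_nonneg.lt_or_eq with hs_pos | h0
  · -- 0 < s
    have hxy_ne : x ≠ y := by
      intro h
      rw [hs_def, sphDist, h, rinner_eq, hyy, Real.arccos_one] at hs_pos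
      exact lt_irrefl _ hs_pos
    suffices hlt : rinner (cahnHoffman F x) z < rinner (cahnHoffman F y) z by
      exact ⟨le_of_lt hlt, ⟨fun he => absurd he (ne_of_lt hlt), fun h => absurd h hxy_ne⟩⟩
    by_cases hym : ⟪x, y⟫ = -1
    · -- y = -x, hence s = π, d = π, z = y
      have hy_eq : y = -x := by
        have h1 : ⟪-x, y⟫ = 1 := by rw [inner_neg_left]; linarith
        exact ((inner_eq_one_iff_of_norm_eq_one (by rw [norm_neg]; exact hx1) hy1).mp h1).symm
      have hsπ : s = π := by
        rw [hs_def, sphDist, rinner_eq, hym, Real.arccos_neg_one]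
      have hs'0 : s' = 0 := by linarith
      have hyz : y = z := by
        have h1 : (1:ℝ) ≤ ⟪y, z⟫ := Real.arccos_eq_zero.mp hs'0
        exact (inner_eq_one_iff_of_norm_eq_one hy1 hz1).mp (le_antisymm hyzu h1)
      rw [rinner_eq, rinner_eq, ← hyz, hy_eq]
      have hL : ⟪cahnHoffman F x, -x⟫ = -F x := by
        rw [inner_neg_right, CH_inner_self hx1]
      have hR : ⟪cahnHoffman F (-x), -x⟫ = F (-x) :=
        CH_inner_self (by rw [norm_neg]; exact hx1)
      rw [hL, hR]
      have hFx : 0 < F x := hpos x hx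
      have hFnx : 0 < F (-x) := hpos (-x) (mem_sph_iff.mpr (by rw [norm_neg]; exact hx1))
      linarith
    · -- -1 < ⟪x,y⟫, so 0 < s < π
      have hsπ : s < π := by
        rcases hd_pi.lt_or_eq with h | h
        · linarith
        · rcases (Real.arccos_le_pi (rinner x y)).lt_or_eq with h2 | h2
          · exact h2
          · exact absurd (le_antisymm (Real.arccos_eq_pi.mp h2) hxyl) hym
      have hsins : 0 < Real.sin s := Real.sin_pos_of_pos_of_lt_pi hs_pos hsπ
      set u : Euc n := (Real.sin s)⁻¹ • (y - Real.cos s • x) with hu_def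
      have hxu : ⟪x, u⟫ = 0 := by
        rw [hu_def, real_inner_smul_right, inner_sub_right, real_inner_smul_right, hxx, ← hcoss]
        ring
      have hyu : y = Real.cos s • x + Real.sin s • u := by
        rw [hu_def, smul_inv_smul₀ (ne_of_gt hsins)]
        abel
      have huu : ⟪u, u⟫ = 1 := by
        have hyx : ⟪y, x⟫ = ⟪x, y⟫ := real_inner_comm x y
        have hexp : ⟪y - Real.cos s • x, y - Real.cos s • x⟫ = Real.sin s * Real.sin s := by
          simp only [inner_sub_left, inner_sub_right, real_inner_smul_left,
            real_inner_smul_right, hxx, hyy, hyx, ← hcoss]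
          nlinarith [Real.sin_sq_add_cos_sq s]
        rw [hu_def, real_inner_smul_left, real_inner_smul_right, hexp]
        field_simp
      have hu1 : ‖u‖ = 1 := norm_eq_one_of_inner_self huu
      by_cases hdπ : d < π
      · -- z in plane: construct u' and show u = u'
        have hsind : 0 < Real.sin d := Real.sin_pos_of_pos_of_lt_pi hd_pos hdπ
        set u' : Euc n := (Real.sin d)⁻¹ • (z - Real.cos d • x) with hu'_def
        have hxu' : ⟪x, u'⟫ = 0 := by
          rw [hu'_def, real_inner_smul_right, inner_sub_right, real_inner_smul_right, hxx,
            ← hcosd]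
          ring
        have hzu : z = Real.cos d • x + Real.sin d • u' := by
          rw [hu'_def, smul_inv_smul₀ (ne_of_gt hsind)]
          abel
        have hzz : ⟪z, z⟫ = 1 := by rw [real_inner_self_eq_norm_mul_norm, hz1]; ring
        have hu'u' : ⟪u', u'⟫ = 1 := by
          have hzx : ⟪z, x⟫ = ⟪x, z⟫ := real_inner_comm x z
          have hexp : ⟪z - Real.cos d • x, z - Real.cos d • x⟫ = Real.sin d * Real.sin d := by
            simp only [inner_sub_left, inner_sub_right, real_inner_smul_left,
              real_inner_smul_right, hxx, hzz, hzx, ← hcosd]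
            nlinarith [Real.sin_sq_add_cos_sq d]
          rw [hu'_def, real_inner_smul_left, real_inner_smul_right, hexp]
          field_simp
        have hu'1 : ‖u'‖ = 1 := norm_eq_one_of_inner_self hu'u'
        have hs'e : s' = d - s := by linarith
        have hyz_inner : ⟪y, z⟫ = Real.cos d * Real.cos s + Real.sin d * Real.sin s := by
          rw [← hcoss', hs'e, Real.cos_sub]
        have hux : ⟪u, x⟫ = 0 := by rw [real_inner_comm]; exact hxu
        have hcompute : ⟪y, z⟫ =
            Real.cos s * Real.cos d + Real.sin s * Real.sin d * ⟪u, u'⟫ := by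
          calc ⟪y, z⟫ = ⟪Real.cos s • x + Real.sin s • u,
              Real.cos d • x + Real.sin d • u'⟫ := by rw [← hyu, ← hzu]
          _ = Real.cos s * Real.cos d + Real.sin s * Real.sin d * ⟪u, u'⟫ := by
              simp only [inner_add_left, inner_add_right, real_inner_smul_left,
                real_inner_smul_right, hxx, hxu, hxu', hux]
              ring
        have huu' : ⟪u, u'⟫ = 1 := by
          have hne : Real.sin s * Real.sin d ≠ 0 := by positivity
          have heq : Real.sin s * Real.sin d * ⟪u, u'⟫ = Real.sin s * Real.sin d * 1 := by
            rw [mul_one]; linarith [hcompute, hyz_inner]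
          exact mul_left_cancel₀ hne heq
        have hu_eq : u = u' := (inner_eq_one_iff_of_norm_eq_one hu1 hu'1).mp huu'
        have main := key hF hA hx1 hu1 hxu hs_pos hsd hd_pi
        rw [← hyu, hu_eq, ← hzu] at main
        exact main
      · -- d = π, z = -x
        have hdeq : d = π := le_antisymm hd_pi (not_lt.mp hdπ)
        have hz_eq : z = -x := by
          have h1 : ⟪-x, z⟫ = 1 := by
            rw [inner_neg_left, ← hcosd, hdeq, Real.cos_pi]; ring
          exact ((inner_eq_one_iff_of_norm_eq_one (by rw [norm_neg]; exact hx1) hz1).mp h1).symm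
        have main := key hF hA hx1 hu1 hxu hs_pos (by linarith : s ≤ π) (le_refl π)
        simp only [Real.cos_pi, Real.sin_pi, neg_smul, one_smul, zero_smul, add_zero] at main
        rw [← hyu, ← hz_eq] at main
        exact main
  · -- s = 0 → x = y
    have h1 : (1:ℝ) ≤ ⟪x, y⟫ := Real.arccos_eq_zero.mp h0.symm
    have hxy : x = y := (inner_eq_one_iff_of_norm_eq_one hx1 hy1).mp (le_antisymm hxyu h1)
    subst hxy
    exact ⟨le_refl _, iff_of_true rfl rfl⟩

end AUXSEC
end
end

section
/- Let F° be the dual of a positive continuous F : S^n → ℝ. If ω₀ ∈ (−F(E_{n+1}), F(−E_{n+1})) then F°(−ω₀ E^F_{n+1}) < 1, where E^F_{n+1} is the F-adapted vertical vector. -/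
open MeasureTheory

noncomputable section

namespace Stmt7Aux

local notation "⟪" x ", " y "⟫" => @inner ℝ _ _ x y

variable {n : ℕ}

lemma mem_sph_iff {z : Euc n} : z ∈ sph n ↔ ‖z‖ = 1 := by
  simp [sph, mem_sphere_zero_iff_norm]

lemma contDiff_CH {F : Euc n → ℝ} (hF : ContDiff ℝ 2 F) :
    ContDiff ℝ 1 (cahnHoffman F) := by
  have hgrad : ContDiff ℝ 1 (gradient F) :=
    ((InnerProductSpace.toDual ℝ (Euc n)).symm.contDiff).comp
      (hF.fderiv_right (m := 1) (by norm_num))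
  have hF1 : ContDiff ℝ 1 F := hF.of_le (by norm_num)
  have hri : ContDiff ℝ 1 (fun z : Euc n => rinner (gradient F z) z) := by
    have : ContDiff ℝ 1 (fun z : Euc n => ⟪gradient F z, z⟫) :=
      ContDiff.inner ℝ hgrad contDiff_id
    exact this
  exact ((hgrad.sub (hri.smul contDiff_id)).add (hF1.smul contDiff_id))

lemma inner_gradient {F : Euc n → ℝ} (z v : Euc n) :
    ⟪gradient F z, v⟫ = fderiv ℝ F z v := by
  rw [gradient, InnerProductSpace.toDual_symm_apply]

lemma inner_CH_self {F : Euc n → ℝ} {z : Euc n} (hz : ‖z‖ = 1) :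
    ⟪cahnHoffman F z, z⟫ = F z := by
  have hzz : ⟪z, z⟫ = 1 := by
    rw [real_inner_self_eq_norm_mul_norm, hz]; ring
  simp only [cahnHoffman, sphGrad, rinner, inner_add_left, inner_sub_left,
    real_inner_smul_left, hzz]
  ring

lemma inner_CH_tangent {F : Euc n → ℝ} {z v : Euc n} (hzv : ⟪z, v⟫ = 0) :
    ⟪cahnHoffman F z, v⟫ = fderiv ℝ F z v := by
  have hvz : ⟪gradient F z, v⟫ = fderiv ℝ F z v := inner_gradient z v
  simp only [cahnHoffman, sphGrad, rinner, inner_add_left, inner_sub_left,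
    real_inner_smul_left, hzv, hvz]
  ring

/-- Key geodesic lemma : `⟪Φ w, γ θ⟫ ≤ F (γ θ)` for `θ ∈ (0, π)`. -/
lemma geodesic_le {F : Euc n → ℝ} (hF : ContDiff ℝ 2 F) (hA : APos F)
    {w e : Euc n} (hw : ‖w‖ = 1) (he : ‖e‖ = 1) (hwe : ⟪w, e⟫ = 0)
    {θs : ℝ} (hθs : θs ∈ Set.Ioo 0 Real.pi) :
    ⟪cahnHoffman F w, Real.cos θs • w + Real.sin θs • e⟫
      ≤ F (Real.cos θs • w + Real.sin θs • e) := by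
  set Φ := cahnHoffman F with hΦdef
  have hww : ⟪w, w⟫ = 1 := by rw [real_inner_self_eq_norm_mul_norm, hw]; ring
  have hee : ⟪e, e⟫ = 1 := by rw [real_inner_self_eq_norm_mul_norm, he]; ring
  have hew : ⟪e, w⟫ = 0 := by rw [real_inner_comm]; exact hwe
  set γ : ℝ → Euc n := fun θ => Real.cos θ • w + Real.sin θ • e with hγdef
  set δ : ℝ → Euc n := fun θ => (-Real.sin θ) • w + Real.cos θ • e with hδdef
  have hinner : ∀ a b c d : ℝ, ⟪a • w + b • e, c • w + d • e⟫ = a * c + b * d := by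
    intro a b c d
    simp only [inner_add_left, inner_add_right, real_inner_smul_left,
      real_inner_smul_right, hww, hee, hwe, hew]
    ring
  have hγγ : ∀ θ, ⟪γ θ, γ θ⟫ = 1 := fun θ => by
    rw [hinner]; nlinarith [Real.sin_sq_add_cos_sq θ]
  have hδδ : ∀ θ, ⟪δ θ, δ θ⟫ = 1 := fun θ => by
    rw [hinner]; nlinarith [Real.sin_sq_add_cos_sq θ]
  have hγδ0 : ∀ θ, ⟪γ θ, δ θ⟫ = 0 := fun θ => by rw [hinner]; ring
  have hγnorm : ∀ θ, ‖γ θ‖ = 1 := fun θ => by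
    have := hγγ θ; rw [real_inner_self_eq_norm_mul_norm] at this
    nlinarith [norm_nonneg (γ θ)]
  have hδnorm : ∀ θ, ‖δ θ‖ = 1 := fun θ => by
    have := hδδ θ; rw [real_inner_self_eq_norm_mul_norm] at this
    nlinarith [norm_nonneg (δ θ)]
  have hδne : ∀ θ, δ θ ≠ 0 := fun θ h => by
    have := hδnorm θ; rw [h, norm_zero] at this; norm_num at this
  have hγsph : ∀ θ, γ θ ∈ sph n := fun θ => mem_sph_iff.2 (hγnorm θ)
  have hγ' : ∀ θ, HasDerivAt γ (δ θ) θ := by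
    intro θ
    exact ((Real.hasDerivAt_cos θ).smul_const w).add ((Real.hasDerivAt_sin θ).smul_const e)
  have hδ' : ∀ θ, HasDerivAt δ (-(γ θ)) θ := by
    intro θ
    have h := (((Real.hasDerivAt_sin θ).neg).smul_const w).add
      ((Real.hasDerivAt_cos θ).smul_const e)
    refine h.congr_deriv ?_
    simp only [hγdef, hδdef, neg_add, neg_smul]
  have hFd : Differentiable ℝ F := hF.differentiable (by norm_num)
  have hΦc : ContDiff ℝ 1 Φ := contDiff_CH hF
  have hΦd : Differentiable ℝ Φ := hΦc.differentiable (by norm_num)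
  set u : ℝ → ℝ := fun θ => F (γ θ) - ⟪Φ w, γ θ⟫ with hudef
  set u1 : ℝ → ℝ := fun θ => ⟪Φ (γ θ), δ θ⟫ - ⟪Φ w, δ θ⟫ with hu1def
  set K : ℝ → ℝ := fun θ => ⟪(fderiv ℝ Φ (γ θ)) (δ θ), δ θ⟫ with hKdef
  set v : ℝ → ℝ := fun θ => u1 θ * Real.sin θ - u θ * Real.cos θ with hvdef
  have hγ0 : γ 0 = w := by simp [hγdef]
  have hu : ∀ θ, HasDerivAt u (u1 θ) θ := by
    intro θ
    have h1 : HasDerivAt (fun θ => F (γ θ)) (fderiv ℝ F (γ θ) (δ θ)) θ :=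
      (hFd (γ θ)).hasFDerivAt.comp_hasDerivAt θ (hγ' θ)
    have h1' : HasDerivAt (fun θ => F (γ θ)) (⟪Φ (γ θ), δ θ⟫) θ := by
      rwa [← inner_CH_tangent (hγδ0 θ)] at h1
    have h2 : HasDerivAt (fun θ => ⟪Φ w, γ θ⟫) (⟪Φ w, δ θ⟫) θ := by
      simpa using HasDerivAt.inner ℝ (hasDerivAt_const θ (Φ w)) (hγ' θ)
    exact h1'.sub h2
  have hu1 : ∀ θ, HasDerivAt u1 (K θ - u θ) θ := by
    intro θ
    have hΦγ : HasDerivAt (fun θ => Φ (γ θ)) ((fderiv ℝ Φ (γ θ)) (δ θ)) θ :=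
      (hΦd (γ θ)).hasFDerivAt.comp_hasDerivAt θ (hγ' θ)
    have h1 : HasDerivAt (fun θ => ⟪Φ (γ θ), δ θ⟫)
        (⟪Φ (γ θ), -(γ θ)⟫ + ⟪(fderiv ℝ Φ (γ θ)) (δ θ), δ θ⟫) θ :=
      HasDerivAt.inner ℝ hΦγ (hδ' θ)
    have h2 : HasDerivAt (fun θ => ⟪Φ w, δ θ⟫) (⟪Φ w, -(γ θ)⟫) θ := by
      simpa using HasDerivAt.inner ℝ (hasDerivAt_const θ (Φ w)) (hδ' θ)
    have h3 := h1.sub h2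
    refine h3.congr_deriv ?_
    have e1 : ⟪Φ (γ θ), -(γ θ)⟫ = -(F (γ θ)) := by
      rw [inner_neg_right, inner_CH_self (hγnorm θ)]
    have e2 : ⟪Φ w, -(γ θ)⟫ = -⟪Φ w, γ θ⟫ := inner_neg_right _ _
    rw [e1, e2, hKdef, hudef]
    ring
  have hK : ∀ θ, 0 < K θ := by
    intro θ
    have horth : rinner (δ θ) (γ θ) = 0 := by
      show ⟪δ θ, γ θ⟫ = 0
      rw [real_inner_comm]; exact hγδ0 θ
    exact hA (γ θ) (hγsph θ) (δ θ) horth (hδne θ)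
  have hv : ∀ θ, HasDerivAt v (K θ * Real.sin θ) θ := by
    intro θ
    have h := ((hu1 θ).mul (Real.hasDerivAt_sin θ)).sub
      ((hu θ).mul (Real.hasDerivAt_cos θ))
    refine h.congr_deriv ?_
    ring
  have hu0 : u 0 = 0 := by
    simp only [hudef, hγ0, hΦdef, inner_CH_self hw, sub_self]
  have hvmono : MonotoneOn v (Set.Icc 0 Real.pi) := by
    apply monotoneOn_of_deriv_nonneg (convex_Icc 0 Real.pi)
    · exact fun x _ => ((hv x).continuousAt).continuousWithinAt
    · exact fun x _ => ((hv x).differentiableAt).differentiableWithinAt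
    · intro x hx
      rw [interior_Icc] at hx
      rw [(hv x).deriv]
      exact mul_nonneg (hK x).le (Real.sin_nonneg_of_nonneg_of_le_pi hx.1.le hx.2.le)
  have hv0 : v 0 = 0 := by simp [hvdef, hu0]
  have hvnn : ∀ θ ∈ Set.Icc (0:ℝ) Real.pi, 0 ≤ v θ := by
    intro θ hθ
    have := hvmono (Set.left_mem_Icc.2 Real.pi_pos.le) hθ hθ.1
    rwa [hv0] at this
  -- q = u / sin is monotone on (0, π)
  set q : ℝ → ℝ := fun θ => u θ / Real.sin θ with hqdef
  have hq : ∀ θ ∈ Set.Ioo (0:ℝ) Real.pi, HasDerivAt q (v θ / (Real.sin θ) ^ 2) θ := by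
    intro θ hθ
    have hsne : Real.sin θ ≠ 0 := (Real.sin_pos_of_pos_of_lt_pi hθ.1 hθ.2).ne'
    exact (hu θ).div (Real.hasDerivAt_sin θ) hsne
  have hqmono : MonotoneOn q (Set.Ioo 0 Real.pi) := by
    apply monotoneOn_of_deriv_nonneg (convex_Ioo 0 Real.pi)
    · intro x hx; exact ((hq x hx).continuousAt).continuousWithinAt
    · intro x hx
      rw [interior_Ioo] at hx
      exact ((hq x hx).differentiableAt).differentiableWithinAt
    · intro x hx
      rw [interior_Ioo] at hx
      rw [(hq x hx).deriv]
      exact div_nonneg (hvnn x ⟨hx.1.le, hx.2.le⟩) (sq_nonneg _)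
  -- q tends to 0 at 0 from the right
  have hu10 : u1 0 = 0 := by simp [hu1def, hγ0]
  have hslope_u : Filter.Tendsto (fun t => u t / t) (nhdsWithin 0 {(0:ℝ)}ᶜ) (nhds 0) := by
    have h := hasDerivAt_iff_tendsto_slope.1 (hu 0)
    rw [hu10] at h
    refine h.congr (fun t => ?_)
    simp [slope, hu0, div_eq_inv_mul]
  have hslope_sin : Filter.Tendsto (fun t => Real.sin t / t)
      (nhdsWithin 0 {(0:ℝ)}ᶜ) (nhds 1) := by
    have h := hasDerivAt_iff_tendsto_slope.1 (Real.hasDerivAt_sin 0)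
    rw [Real.cos_zero] at h
    refine h.congr (fun t => ?_)
    simp [slope, div_eq_inv_mul]
  have hioosub : Set.Ioo (0:ℝ) θs ⊆ {(0:ℝ)}ᶜ := fun t ht => (ne_of_gt ht.1)
  have hle : nhdsWithin (0:ℝ) (Set.Ioo 0 θs) ≤ nhdsWithin 0 {(0:ℝ)}ᶜ :=
    nhdsWithin_mono 0 hioosub
  have hqlim : Filter.Tendsto q (nhdsWithin 0 (Set.Ioo 0 θs)) (nhds 0) := by
    have h1 : Filter.Tendsto (fun t => (u t / t) / (Real.sin t / t))
        (nhdsWithin 0 (Set.Ioo 0 θs)) (nhds (0 / 1)) :=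
      Filter.Tendsto.div (hslope_u.mono_left hle) (hslope_sin.mono_left hle) one_ne_zero
    rw [div_one] at h1
    refine h1.congr' ?_
    filter_upwards [self_mem_nhdsWithin] with t ht
    have ht0 : t ≠ 0 := ne_of_gt ht.1
    have hst : Real.sin t ≠ 0 :=
      (Real.sin_pos_of_pos_of_lt_pi ht.1 (ht.2.trans hθs.2)).ne'
    show u t / t / (Real.sin t / t) = u t / Real.sin t
    field_simp
  have hnebot : (nhdsWithin (0:ℝ) (Set.Ioo 0 θs)).NeBot := by
    apply mem_closure_iff_nhdsWithin_neBot.1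
    rw [closure_Ioo (ne_of_lt hθs.1)]
    exact Set.left_mem_Icc.2 hθs.1.le
  have hq0 : 0 ≤ q θs := by
    refine le_of_tendsto hqlim ?_
    filter_upwards [self_mem_nhdsWithin] with t ht
    exact hqmono ⟨ht.1, ht.2.trans hθs.2⟩ hθs ht.2.le
  have hsθ : 0 < Real.sin θs := Real.sin_pos_of_pos_of_lt_pi hθs.1 hθs.2
  have huθ : 0 ≤ u θs := by
    have h1 : u θs = q θs * Real.sin θs := (div_mul_cancel₀ (u θs) hsθ.ne').symm
    rw [h1]
    exact mul_nonneg hq0 hsθ.le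
  have h2 : u θs = F (γ θs) - ⟪Φ w, γ θs⟫ := rfl
  show ⟪Φ w, γ θs⟫ ≤ F (γ θs)
  linarith

/-- Main convexity-type inequality: `⟪Φ w, z⟫ ≤ F z` for `w, z` on the sphere. -/
lemma inner_CH_le {F : Euc n → ℝ} (hF : ContDiff ℝ 2 F)
    (hpos : ∀ z ∈ sph n, 0 < F z) (hA : APos F)
    {w : Euc n} (hw : w ∈ sph n) {z : Euc n} (hz : z ∈ sph n) :
    ⟪cahnHoffman F w, z⟫ ≤ F z := by
  rw [mem_sph_iff] at hw hz
  have hww : ⟪w, w⟫ = 1 := by rw [real_inner_self_eq_norm_mul_norm, hw]; ring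
  set c : ℝ := ⟪w, z⟫ with hcdef
  set d : Euc n := z - c • w with hddef
  have hdd : ⟪d, d⟫ = 1 - c ^ 2 := by
    have hzz : ⟪z, z⟫ = 1 := by rw [real_inner_self_eq_norm_mul_norm, hz]; ring
    have hzw : ⟪z, w⟫ = c := by rw [real_inner_comm]
    simp only [hddef, inner_sub_left, inner_sub_right, real_inner_smul_left,
      real_inner_smul_right, hww, hzz, hzw, hcdef]
    ring
  by_cases hd0 : d = 0
  · -- z = c • w, c = ±1
    have hzcw : z = c • w := by
      have := hd0; rw [hddef, sub_eq_zero] at this; exact this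
    have hc2 : c ^ 2 = 1 := by
      have := hdd; rw [hd0, inner_zero_left] at this; linarith
    have hc : c = 1 ∨ c = -1 := by
      have hfac : (c - 1) * (c + 1) = 0 := by nlinarith
      rcases mul_eq_zero.1 hfac with h | h
      · exact Or.inl (by linarith)
      · exact Or.inr (by linarith)
    rcases hc with hc | hc
    · have hzw : z = w := by rw [hzcw, hc, one_smul]
      rw [hzw, inner_CH_self hw]
    · have hzw : z = (-1 : ℝ) • w := by rw [hzcw, hc]
      rw [hzw]
      have h1 : ⟪cahnHoffman F w, (-1 : ℝ) • w⟫ = -(F w) := by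
        rw [real_inner_smul_right, inner_CH_self hw]; ring
      rw [h1]
      have hFw : 0 < F w := hpos w (mem_sph_iff.2 hw)
      have hFz : 0 < F ((-1 : ℝ) • w) := by
        apply hpos
        rw [mem_sph_iff, norm_smul, hw]
        norm_num
      linarith
  · have hdd_pos : 0 < 1 - c ^ 2 := by
      have hne : ⟪d, d⟫ ≠ 0 := fun h => hd0 (inner_self_eq_zero.1 h)
      have h0 : (0:ℝ) ≤ ⟪d, d⟫ := real_inner_self_nonneg
      rw [← hdd]
      exact lt_of_le_of_ne h0 (Ne.symm hne)
    have hc1 : c < 1 := by nlinarith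
    have hcm1 : -1 < c := by nlinarith
    set s : ℝ := Real.sqrt (1 - c ^ 2) with hsdef
    have hs_pos : 0 < s := Real.sqrt_pos.2 hdd_pos
    have hdn : ‖d‖ = s := by
      have h1 : ‖d‖ ^ 2 = 1 - c ^ 2 := by
        rw [← real_inner_self_eq_norm_sq]; exact hdd
      rw [hsdef, ← h1, Real.sqrt_sq (norm_nonneg d)]
    set e : Euc n := s⁻¹ • d with hedef
    have he : ‖e‖ = 1 := by
      rw [hedef, norm_smul, hdn, Real.norm_eq_abs, abs_inv, abs_of_pos hs_pos]
      exact inv_mul_cancel₀ hs_pos.ne'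
    have hwe : ⟪w, e⟫ = 0 := by
      rw [hedef, real_inner_smul_right, hddef, inner_sub_right, real_inner_smul_right, hww]
      simp [hcdef]
    set θs : ℝ := Real.arccos c with hθdef
    have hθ1 : 0 < θs := Real.arccos_pos.2 hc1
    have hθ2 : θs < Real.pi := by
      rcases lt_or_eq_of_le (Real.arccos_le_pi c) with h | h
      · exact h
      · exfalso
        have : c = -1 := by
          have hcc := Real.cos_arccos hcm1.le hc1.le
          rw [h, Real.cos_pi] at hcc
          linarith
        linarith
    have hcos : Real.cos θs = c := Real.cos_arccos hcm1.le hc1.le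
    have hsin : Real.sin θs = s := by
      rw [hθdef, Real.sin_arccos, hsdef]
    have hγz : Real.cos θs • w + Real.sin θs • e = z := by
      rw [hcos, hsin, hedef, smul_smul, mul_inv_cancel₀ hs_pos.ne', one_smul, hddef]
      abel
    have := geodesic_le hF hA hw he hwe ⟨hθ1, hθ2⟩
    rwa [hγz] at this

lemma vert_mem_sph : vert n ∈ sph n := by
  rw [mem_sph_iff, vert, EuclideanSpace.norm_single]
  norm_num

lemma neg_vert_mem_sph : -vert n ∈ sph n := by
  rw [mem_sph_iff, norm_neg, vert, EuclideanSpace.norm_single]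
  norm_num

end Stmt7Aux

/-- `F°(−ω₀ E^F_{n+1}) < 1` whenever `ω₀ ∈ (−F(E_{n+1}), F(−E_{n+1}))`. -/
theorem fdual_neg_omega_EF_lt_one {n : ℕ} (F : Euc n → ℝ)
    (hF : ContDiff ℝ 2 F) (hcont : ContinuousOn F (sph n))
    (hpos : ∀ z ∈ sph n, 0 < F z) (hA : APos F)
    (ω₀ : ℝ) (hω₁ : -F (vert n) < ω₀) (hω₂ : ω₀ < F (-vert n)) :
    Fdual F (-(ω₀ • EFvert F ω₀)) < 1 := by
  have hvmem := Stmt7Aux.vert_mem_sph (n := n)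
  have hnvmem := Stmt7Aux.neg_vert_mem_sph (n := n)
  have hFv : 0 < F (vert n) := hpos _ hvmem
  have hFnv : 0 < F (-vert n) := hpos _ hnvmem
  rcases lt_trichotomy ω₀ 0 with hlt | heq | hgt
  · -- ω₀ < 0
    set t : ℝ := -ω₀ / F (vert n) with htdef
    have ht0 : 0 < t := div_pos (by linarith) hFv
    have ht1 : t < 1 := (div_lt_one hFv).2 (by linarith)
    have hbound : Fdual F (-(ω₀ • EFvert F ω₀)) ≤ t := by
      apply Real.sSup_le _ ht0.le
      rintro y ⟨z, hz, rfl⟩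
      have hFz : 0 < F z := hpos z hz
      have hEF : EFvert F ω₀ = (F (vert n))⁻¹ • cahnHoffman F (vert n) := by
        simp [EFvert, hlt]
      have hx : rinner (-(ω₀ • EFvert F ω₀)) z
          = t * (@inner ℝ _ _ (cahnHoffman F (vert n)) z) := by
        rw [hEF]
        show @inner ℝ _ _ (-(ω₀ • (F (vert n))⁻¹ • cahnHoffman F (vert n))) z = _
        rw [inner_neg_left, real_inner_smul_left, real_inner_smul_left, htdef]
        field_simp
      rw [hx, div_le_iff₀ hFz]
      have hkey := Stmt7Aux.inner_CH_le hF hpos hA hvmem hz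
      calc t * (@inner ℝ _ _ (cahnHoffman F (vert n)) z) ≤ t * F z :=
            mul_le_mul_of_nonneg_left hkey ht0.le
        _ = t * F z := rfl
    exact lt_of_le_of_lt hbound ht1
  · -- ω₀ = 0
    have hx : -(ω₀ • EFvert F ω₀) = 0 := by rw [heq]; simp
    have hbound : Fdual F (-(ω₀ • EFvert F ω₀)) ≤ 0 := by
      apply Real.sSup_le _ le_rfl
      rintro y ⟨z, hz, rfl⟩
      rw [hx]
      show @inner ℝ _ _ (0 : Euc n) z / F z ≤ 0
      rw [inner_zero_left, zero_div]
    linarith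
  · -- 0 < ω₀
    set t : ℝ := ω₀ / F (-vert n) with htdef
    have ht0 : 0 < t := div_pos hgt hFnv
    have ht1 : t < 1 := (div_lt_one hFnv).2 hω₂
    have hbound : Fdual F (-(ω₀ • EFvert F ω₀)) ≤ t := by
      apply Real.sSup_le _ ht0.le
      rintro y ⟨z, hz, rfl⟩
      have hFz : 0 < F z := hpos z hz
      have hEF : EFvert F ω₀ = -((F (-vert n))⁻¹ • cahnHoffman F (-vert n)) := by
        simp [EFvert, hgt, not_lt.2 hgt.le]
      have hx : rinner (-(ω₀ • EFvert F ω₀)) z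
          = t * (@inner ℝ _ _ (cahnHoffman F (-vert n)) z) := by
        rw [hEF]
        show @inner ℝ _ _ (-(ω₀ • -((F (-vert n))⁻¹ • cahnHoffman F (-vert n)))) z = _
        rw [smul_neg, neg_neg, real_inner_smul_left, real_inner_smul_left, htdef]
        field_simp
      rw [hx, div_le_iff₀ hFz]
      have hkey := Stmt7Aux.inner_CH_le hF hpos hA hnvmem hz
      exact mul_le_mul_of_nonneg_left hkey ht0.le
    exact lt_of_le_of_lt hbound ht1
end
end
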